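/- For all real parameters p, q, the 5-dimensional example admits a Ricci-like soliton with potential ξ and constants (λ, μ, ν) = (0, 1, -5): for all x, y ∈ 𝔤, ½(g(∇ₓξ, y) + g(x, ∇_yξ)) + ρ(x, y) + 0·g(x, y) + 1·g̃(x, y) - 5η(x)η(y) = 0, where ρ(y, z) is the trace of x ↦ ∇ₓ∇_y z - ∇_y∇ₓ z - ∇_{[x,y]} z and g̃(x, y) = g(x, φy) + η(x)η(y). -/

import Mathlib

noncomputable section

/-- The underlying 5-dimensional real vector space. -/
abbrev V5 := Fin 5 → ℝ

/-- The basis `(e₀, e₁, e₂, e₃, e₄)` (standard basis of `ℝ⁵`). -/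
def e5 (i : Fin 5) : V5 := Pi.single i 1

/-- The Lie bracket: the bilinear extension of
`[e₀,e₁] = p e₂ + e₃ + q e₄`, `[e₀,e₂] = -p e₁ - q e₃ + e₄`,
`[e₀,e₃] = -e₁ - q e₂ + p e₄`, `[e₀,e₄] = q e₁ - e₂ - p e₃`,
all other brackets of basis vectors being zero. -/
def br5 (p q : ℝ) (x y : V5) : V5 :=
  (x 0 * y 1 - y 0 * x 1) • (![0, 0, p, 1, q] : V5)
    + (x 0 * y 2 - y 0 * x 2) • (![0, -p, 0, -q, 1] : V5)
    + (x 0 * y 3 - y 0 * x 3) • (![0, -1, -q, 0, p] : V5)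
    + (x 0 * y 4 - y 0 * x 4) • (![0, q, -1, -p, 0] : V5)

/-- The B-metric `g`: `g(e₀,e₀) = g(e₁,e₁) = g(e₂,e₂) = 1`,
`g(e₃,e₃) = g(e₄,e₄) = -1`, `g(eᵢ,eⱼ) = 0` for `i ≠ j`. -/
def gM5 (x y : V5) : ℝ :=
  x 0 * y 0 + x 1 * y 1 + x 2 * y 2 - x 3 * y 3 - x 4 * y 4

/-- The structure endomorphism `φ`:
`φe₁ = e₃`, `φe₂ = e₄`, `φe₃ = -e₁`, `φe₄ = -e₂`, `φe₀ = 0`. -/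
def phi5 (x : V5) : V5 := ![0, -(x 3), -(x 4), x 1, x 2]

/-- The Reeb vector field `ξ = e₀`. -/
def xi5 : V5 := e5 0

/-- The contact form `η`: `η(e₀) = 1`, `η(eᵢ) = 0` for `i = 1,…,4`. -/
def eta5 (x : V5) : ℝ := x 0

/-- The Koszul formula for the Levi-Civita connection of a left-invariant metric. -/
def Koszul5 (p q : ℝ) (nabla : V5 → V5 → V5) : Prop :=
  ∀ x y z : V5,
    2 * gM5 (nabla x y) z
      = gM5 (br5 p q x y) z - gM5 (br5 p q y z) x + gM5 (br5 p q z x) y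

/-- The curvature tensor `R(x,y)z = ∇ₓ∇_y z - ∇_y ∇ₓ z - ∇_{[x,y]} z`. -/
def R5 (p q : ℝ) (nabla : V5 → V5 → V5) (x y z : V5) : V5 :=
  nabla x (nabla y z) - nabla y (nabla x z) - nabla (br5 p q x y) z

/-- The Ricci tensor `ρ(y,z)`: the trace of the map `x ↦ R(x,y)z`,
computed in the standard basis. -/
def ric5 (p q : ℝ) (nabla : V5 → V5 → V5) (y z : V5) : ℝ :=
  ∑ i : Fin 5, R5 p q nabla (e5 i) y z i

/-- The associated B-metric `g̃(x,y) = g(x, φy) + η(x)η(y)`. -/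
def gt5 (x y : V5) : ℝ := gM5 x (phi5 y) + eta5 x * eta5 y

/-!
Koszul's formula pins the connection down to an explicit bilinear map, for which
`∇ₓξ = -φx`. Since `φ` is `g`-symmetric, `½𝓛_ξ g = -g(·, φ·)` cancels the `g(·, φ·)` part of `g̃`,
and a direct computation gives `ρ = 4 η ⊗ η`, which cancels the rest.
-/

def leviCivita5 (p q : ℝ) (x y : V5) : V5 :=
  ![-(x 4 * y 2) - x 3 * y 1 - x 2 * y 4 - x 1 * y 3,
    x 3 * y 0 + q * x 0 * y 4 - p * x 0 * y 2,
    x 4 * y 0 - q * x 0 * y 3 + p * x 0 * y 1,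
    -(x 1 * y 0) - q * x 0 * y 2 - p * x 0 * y 4,
    -(x 2 * y 0) + q * x 0 * y 1 + p * x 0 * y 3]

theorem Koszul5.eq_leviCivita5 {p q : ℝ} {nabla : V5 → V5 → V5} (hK : Koszul5 p q nabla) :
    nabla = leviCivita5 p q := by
  funext x y i
  have h0 := hK x y (e5 0)
  have h1 := hK x y (e5 1)
  have h2 := hK x y (e5 2)
  have h3 := hK x y (e5 3)
  have h4 := hK x y (e5 4)
  simp only [gM5, br5, e5, Pi.add_apply, Pi.smul_apply, smul_eq_mul, Pi.single_apply,
    Matrix.cons_val, Fin.reduceEq, reduceIte, mul_zero, mul_one, add_zero, sub_zero,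
    zero_add, zero_sub] at h0 h1 h2 h3 h4
  fin_cases i <;> simp only [leviCivita5, Fin.zero_eta, Fin.mk_one, Fin.reduceFinMk,
    Matrix.cons_val]
  · linear_combination h0 / 2
  · linear_combination h1 / 2
  · linear_combination h2 / 2
  · linear_combination -h3 / 2
  · linear_combination -h4 / 2

theorem leviCivita5_xi5 (p q : ℝ) (x : V5) : leviCivita5 p q x xi5 = -phi5 x := by
  funext i
  fin_cases i <;> simp [leviCivita5, phi5, xi5, e5]

theorem gM5_phi5_left (x y : V5) : gM5 (phi5 x) y = gM5 x (phi5 y) := by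
  simp only [gM5, phi5, Matrix.cons_val]
  ring

theorem ric5_leviCivita5 (p q : ℝ) (x y : V5) :
    ric5 p q (leviCivita5 p q) x y = 4 * (eta5 x * eta5 y) := by
  simp only [ric5, R5, leviCivita5, br5, eta5, e5, Fin.sum_univ_five, Pi.sub_apply,
    Pi.add_apply, Pi.smul_apply, smul_eq_mul, Pi.single_apply, Matrix.cons_val, Fin.reduceEq,
    reduceIte]
  ring

/-- For all real parameters `p, q`, the 5-dimensional example admits a Ricci-like
soliton with potential `ξ` and constants `(λ, μ, ν) = (0, 1, -5)`:
`½𝓛_ξ g + ρ + 0·g + 1·g̃ - 5 η⊗η = 0`. -/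
theorem ricci_like_soliton_5dim (p q : ℝ) (nabla : V5 → V5 → V5)
    (hK : Koszul5 p q nabla) :
    ∀ x y : V5,
      (1 / 2 : ℝ) * (gM5 (nabla x xi5) y + gM5 x (nabla y xi5)) + ric5 p q nabla x y
        + 0 * gM5 x y + 1 * gt5 x y + (-5) * (eta5 x * eta5 y) = 0 := by
  intro x y
  have h_lie : gM5 (nabla x xi5) y + gM5 x (nabla y xi5) = -2 * gM5 x (phi5 y) :=
    calc gM5 (nabla x xi5) y + gM5 x (nabla y xi5)
        = -(gM5 (phi5 x) y + gM5 x (phi5 y)) := by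
          rw [hK.eq_leviCivita5, leviCivita5_xi5, leviCivita5_xi5]
          simp only [gM5, Pi.neg_apply]
          ring
      _ = -2 * gM5 x (phi5 y) := by rw [gM5_phi5_left]; ring
  rw [h_lie, hK.eq_leviCivita5, ric5_leviCivita5, gt5]
  ring
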